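/- Let X be an ℝ-tree and A ⊆ X a nonempty, convex and geodesically bounded subset. Then in every play of the Lion-Man game in A with any speed D > 0, physical capture occurs: there exists n₀ ∈ ℕ with d(L_{n₀},M_{n₀}) ≤ D. -/
import Mathlib


open Set Filter Metric

section Defs

variable {X : Type*} [MetricSpace X]

/-- A unit-speed geodesic defined on `[a, b]`. -/
def IsGeodesicOn (γ : ℝ → X) (a b : ℝ) : Prop :=
  ∀ s ∈ Set.Icc a b, ∀ t ∈ Set.Icc a b, dist (γ s) (γ t) = |s - t|

/-- `S` is a geodesic segment joining `x` and `y`. -/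
def IsGeodesicSegment (S : Set X) (x y : X) : Prop :=
  ∃ (a b : ℝ) (γ : ℝ → X), a ≤ b ∧ IsGeodesicOn γ a b ∧ γ a = x ∧ γ b = y ∧
    S = γ '' Set.Icc a b

/-- A geodesic space: every two points are joined by a geodesic segment. -/
def GeodesicSpace (X : Type*) [MetricSpace X] : Prop :=
  ∀ x y : X, ∃ S : Set X, IsGeodesicSegment S x y

/-- A uniquely geodesic space. -/
def UniquelyGeodesic (X : Type*) [MetricSpace X] : Prop :=
  ∀ x y : X, ∃! S : Set X, IsGeodesicSegment S x y

/-- `S` is contained in the closed `M`-neighborhood of `T`. -/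
def InClosedNbhd (S T : Set X) (M : ℝ) : Prop :=
  ∀ p ∈ S, ∃ q ∈ T, dist p q ≤ M

/-- A triangle with sides `S1, S2, S3` is `M`-slim. -/
def SlimTriangle (S1 S2 S3 : Set X) (M : ℝ) : Prop :=
  InClosedNbhd S1 (S2 ∪ S3) M ∧ InClosedNbhd S2 (S1 ∪ S3) M ∧ InClosedNbhd S3 (S1 ∪ S2) M

/-- `X` is `δ`-hyperbolic: every geodesic triangle is `δ`-slim. -/
def DeltaHyperbolic (X : Type*) [MetricSpace X] (δ : ℝ) : Prop :=
  ∀ x y z : X, ∀ S1 S2 S3 : Set X,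
    IsGeodesicSegment S1 x y → IsGeodesicSegment S2 y z → IsGeodesicSegment S3 z x →
    SlimTriangle S1 S2 S3 δ

/-- A geodesic ray `γ : [0, ∞) → X`. -/
def IsGeodesicRay (γ : ℝ → X) : Prop :=
  ∀ s ∈ Set.Ici (0:ℝ), ∀ t ∈ Set.Ici (0:ℝ), dist (γ s) (γ t) = |s - t|

/-- A set is geodesically bounded if it contains no geodesic ray. -/
def GeodesicallyBounded (A : Set X) : Prop :=
  ¬ ∃ γ : ℝ → X, IsGeodesicRay γ ∧ ∀ t ∈ Set.Ici (0:ℝ), γ t ∈ A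

/-- A directional curve `γ : [0, ∞) → X` (with some constant `b ≥ 0`). -/
def IsDirectionalCurve (γ : ℝ → X) : Prop :=
  ∃ b : ℝ, 0 ≤ b ∧ ∀ s ∈ Set.Ici (0:ℝ), ∀ t ∈ Set.Ici (0:ℝ),
    |s - t| - b ≤ dist (γ s) (γ t) ∧ dist (γ s) (γ t) ≤ |s - t|

/-- A set is directionally bounded if it contains no directional curve. -/
def DirectionallyBounded (A : Set X) : Prop :=
  ¬ ∃ γ : ℝ → X, IsDirectionalCurve γ ∧ ∀ t ∈ Set.Ici (0:ℝ), γ t ∈ A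

/-- A subset of a geodesic space is convex if every geodesic segment joining two of its
points is contained in it. -/
def GeodesicConvex (A : Set X) : Prop :=
  ∀ x ∈ A, ∀ y ∈ A, ∀ S : Set X, IsGeodesicSegment S x y → S ⊆ A

/-- The comparison point in the Euclidean plane: the point on the segment from `x'` to `y'`
(of length `L`) at distance `t` from `x'`. -/
noncomputable def cmpPt (x' y' : EuclideanSpace ℝ (Fin 2)) (L t : ℝ) :
    EuclideanSpace ℝ (Fin 2) :=
  AffineMap.lineMap x' y' (t / L)

/-- `X` is a CAT(0) space: it is geodesic and for every geodesic triangle and every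
comparison triangle in the Euclidean plane, distances between points on the triangle are
bounded by the distances between the corresponding comparison points. -/
def CAT0Space (X : Type*) [MetricSpace X] : Prop :=
  GeodesicSpace X ∧
  ∀ (x y z : X) (γ1 γ2 γ3 : ℝ → X),
    IsGeodesicOn γ1 0 (dist x y) → γ1 0 = x → γ1 (dist x y) = y →
    IsGeodesicOn γ2 0 (dist y z) → γ2 0 = y → γ2 (dist y z) = z →
    IsGeodesicOn γ3 0 (dist z x) → γ3 0 = z → γ3 (dist z x) = x →
    ∀ x' y' z' : EuclideanSpace ℝ (Fin 2),
      dist x' y' = dist x y → dist y' z' = dist y z → dist z' x' = dist z x →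
      (∀ s ∈ Set.Icc (0:ℝ) (dist x y), ∀ t ∈ Set.Icc (0:ℝ) (dist y z),
        dist (γ1 s) (γ2 t) ≤ dist (cmpPt x' y' (dist x y) s) (cmpPt y' z' (dist y z) t)) ∧
      (∀ s ∈ Set.Icc (0:ℝ) (dist y z), ∀ t ∈ Set.Icc (0:ℝ) (dist z x),
        dist (γ2 s) (γ3 t) ≤ dist (cmpPt y' z' (dist y z) s) (cmpPt z' x' (dist z x) t)) ∧
      (∀ s ∈ Set.Icc (0:ℝ) (dist z x), ∀ t ∈ Set.Icc (0:ℝ) (dist x y),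
        dist (γ3 s) (γ1 t) ≤ dist (cmpPt z' x' (dist z x) s) (cmpPt x' y' (dist x y) t))

/-- Busemann convexity. -/
def BusemannConvex (X : Type*) [MetricSpace X] : Prop :=
  GeodesicSpace X ∧
  ∀ (a b c d : ℝ) (γ σ : ℝ → X), a ≤ b → c ≤ d →
    IsGeodesicOn γ a b → IsGeodesicOn σ c d →
    ∀ t ∈ Set.Icc (0:ℝ) 1,
      dist (γ ((1-t)*a + t*b)) (σ ((1-t)*c + t*d)) ≤
        (1-t) * dist (γ a) (σ c) + t * dist (γ b) (σ d)

/-- A `(lam, eps)`-quasi-geodesic defined on `[a, b]`. -/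
def IsQuasiGeodesicOn (lam eps : ℝ) (γ : ℝ → X) (a b : ℝ) : Prop :=
  ∀ s ∈ Set.Icc a b, ∀ t ∈ Set.Icc a b,
    (1/lam) * |s - t| - eps ≤ dist (γ s) (γ t) ∧ dist (γ s) (γ t) ≤ lam * |s - t| + eps

/-- A `(lam, eps)`-quasi-geodesic ray. -/
def IsQuasiGeodesicRay (lam eps : ℝ) (γ : ℝ → X) : Prop :=
  ∀ s ∈ Set.Ici (0:ℝ), ∀ t ∈ Set.Ici (0:ℝ),
    (1/lam) * |s - t| - eps ≤ dist (γ s) (γ t) ∧ dist (γ s) (γ t) ≤ lam * |s - t| + eps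

/-- A `k`-local `lam`-quasi-geodesic ray: a `(lam, eps)`-quasi-geodesic ray locally,
for every `eps > 0`. -/
def IsLocalQuasiGeodesicRay (k lam : ℝ) (γ : ℝ → X) : Prop :=
  ∀ eps > (0:ℝ), ∀ s ∈ Set.Ici (0:ℝ), ∀ t ∈ Set.Ici (0:ℝ), |s - t| ≤ k →
    (1/lam) * |s - t| - eps ≤ dist (γ s) (γ t) ∧ dist (γ s) (γ t) ≤ lam * |s - t| + eps

/-- `S` is the image of a `lam`-quasi-geodesic joining `x` and `y`
(i.e. a `(lam, eps)`-quasi-geodesic for every `eps > 0`). -/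
def IsQuasiGeodesicSegment (lam : ℝ) (S : Set X) (x y : X) : Prop :=
  ∃ (a b : ℝ) (γ : ℝ → X), a ≤ b ∧ (∀ eps > (0:ℝ), IsQuasiGeodesicOn lam eps γ a b) ∧
    γ a = x ∧ γ b = y ∧ S = γ '' Set.Icc a b

/-- Every `lam`-quasi-geodesic triangle in `X` is `M`-slim. -/
def QuasiGeodesicTrianglesSlim (X : Type*) [MetricSpace X] (lam M : ℝ) : Prop :=
  ∀ x y z : X, ∀ S1 S2 S3 : Set X,
    IsQuasiGeodesicSegment lam S1 x y → IsQuasiGeodesicSegment lam S2 y z →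
    IsQuasiGeodesicSegment lam S3 z x → SlimTriangle S1 S2 S3 M

/-- A play of the Lion-Man game in `A` with speed `D`. -/
def IsLionManPlay (A : Set X) (D : ℝ) (L M : ℕ → X) : Prop :=
  (∀ n, L n ∈ A) ∧ (∀ n, M n ∈ A) ∧
  (∀ n, ∃ S : Set X, IsGeodesicSegment S (L n) (M n) ∧ L (n+1) ∈ S) ∧
  (∀ n, dist (L n) (L (n+1)) = min D (dist (L n) (M n))) ∧
  (∀ n, dist (M n) (M (n+1)) ≤ D)

/-- The lion wins a play if `d(L_{n+1}, M_n) → 0`. -/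
def LionWins (L M : ℕ → X) : Prop :=
  Filter.Tendsto (fun n => dist (L (n+1)) (M n)) Filter.atTop (nhds 0)

/-- The lion always wins the Lion-Man game played in `A`. -/
def LionAlwaysWins (A : Set X) : Prop :=
  ∀ D > (0:ℝ), ∀ L M : ℕ → X, IsLionManPlay A D L M → LionWins L M

end Defs

section TreeHelpers

variable {X : Type*} [MetricSpace X]

/-- Normalized parametrization of a geodesic segment. -/
lemma isGeodesicSegment_norm {S : Set X} {x y : X} (hS : IsGeodesicSegment S x y) :
    ∃ γ : ℝ → X, IsGeodesicOn γ 0 (dist x y) ∧ γ 0 = x ∧ γ (dist x y) = y ∧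
      S = γ '' Set.Icc 0 (dist x y) := by
  obtain ⟨a, b, γ, hab, hgeo, hga, hgb, him⟩ := hS
  have hd : dist x y = b - a := by
    rw [← hga, ← hgb, hgeo a ⟨le_rfl, hab⟩ b ⟨hab, le_rfl⟩, abs_of_nonpos (by linarith)]
    ring
  refine ⟨fun t => γ (a + t), ?_, by simpa using hga, ?_, ?_⟩
  · intro s hs t ht
    have h1 : a + s ∈ Set.Icc a b := ⟨by linarith [hs.1], by linarith [hs.2, hd.le]⟩
    have h2 : a + t ∈ Set.Icc a b := ⟨by linarith [ht.1], by linarith [ht.2, hd.le]⟩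
    rw [hgeo _ h1 _ h2]
    congr 1
    ring
  · show γ (a + dist x y) = y
    have : a + dist x y = b := by rw [hd]; ring
    rw [this, hgb]
  · rw [him]
    ext p
    constructor
    · rintro ⟨t, ht, rfl⟩
      exact ⟨t - a, ⟨by linarith [ht.1], by linarith [ht.2, hd]⟩, by simp⟩
    · rintro ⟨t, ht, rfl⟩
      exact ⟨a + t, ⟨by linarith [ht.1], by linarith [ht.2, hd]⟩, rfl⟩

/-- The unique geodesic segment joining two points. -/
noncomputable def seg (hU : UniquelyGeodesic X) (x y : X) : Set X := (hU x y).exists.choose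

lemma seg_isSeg (hU : UniquelyGeodesic X) (x y : X) : IsGeodesicSegment (seg hU x y) x y :=
  (hU x y).exists.choose_spec

lemma seg_eq (hU : UniquelyGeodesic X) {S : Set X} {x y : X} (hS : IsGeodesicSegment S x y) :
    S = seg hU x y :=
  (hU x y).unique hS (seg_isSeg hU x y)

lemma dist_add_of_mem_seg (hU : UniquelyGeodesic X) {x y p : X} (hp : p ∈ seg hU x y) :
    dist x p + dist p y = dist x y := by
  obtain ⟨γ, hgeo, hg0, hgd, him⟩ := isGeodesicSegment_norm (seg_isSeg hU x y)
  rw [him] at hp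
  obtain ⟨t, ht, rfl⟩ := hp
  have h0 : (0:ℝ) ∈ Set.Icc (0:ℝ) (dist x y) := ⟨le_rfl, dist_nonneg⟩
  have hdd : dist x y ∈ Set.Icc (0:ℝ) (dist x y) := ⟨dist_nonneg, le_rfl⟩
  have e1 : dist x (γ t) = t := by
    rw [← hg0, hgeo _ h0 _ ht, abs_of_nonpos (by linarith [ht.1])]; ring
  have e2 : dist (γ t) y = dist x y - t := by
    have h' := hgeo t ht (dist x y) hdd
    rw [hgd] at h'
    rw [h', abs_of_nonpos (by linarith [ht.2])]; ring
  rw [e1, e2]; ring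

lemma dist_eq_abs_of_mem_seg (hU : UniquelyGeodesic X) {x y p q : X}
    (hp : p ∈ seg hU x y) (hq : q ∈ seg hU x y) :
    dist p q = |dist x p - dist x q| := by
  obtain ⟨γ, hgeo, hg0, hgd, him⟩ := isGeodesicSegment_norm (seg_isSeg hU x y)
  rw [him] at hp hq
  obtain ⟨s, hs, rfl⟩ := hp
  obtain ⟨t, ht, rfl⟩ := hq
  have h0 : (0:ℝ) ∈ Set.Icc (0:ℝ) (dist x y) := ⟨le_rfl, dist_nonneg⟩
  have e1 : dist x (γ s) = s := by
    rw [← hg0, hgeo _ h0 _ hs, abs_of_nonpos (by linarith [hs.1])]; ring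
  have e2 : dist x (γ t) = t := by
    rw [← hg0, hgeo _ h0 _ ht, abs_of_nonpos (by linarith [ht.1])]; ring
  rw [e1, e2, hgeo _ hs _ ht]

lemma mem_seg_of_dist (hU : UniquelyGeodesic X) {x y p : X}
    (h : dist x p + dist p y = dist x y) : p ∈ seg hU x y := by
  obtain ⟨γ₁, hgeo₁, h10, h1d, him₁⟩ := isGeodesicSegment_norm (seg_isSeg hU x p)
  obtain ⟨γ₂, hgeo₂, h20, h2d, him₂⟩ := isGeodesicSegment_norm (seg_isSeg hU p y)
  set d1 := dist x p with hd1
  set d2 := dist p y with hd2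
  set d := dist x y with hd
  have hd1n : 0 ≤ d1 := dist_nonneg
  have hd2n : 0 ≤ d2 := dist_nonneg
  set γ : ℝ → X := fun t => if t ≤ d1 then γ₁ t else γ₂ (t - d1) with hγ
  -- distances from endpoints
  have e1 : ∀ s ∈ Set.Icc (0:ℝ) d1, dist x (γ₁ s) = s := by
    intro s hs
    rw [← h10, hgeo₁ _ ⟨le_rfl, hd1n⟩ _ hs, abs_of_nonpos (by linarith [hs.1])]; ring
  have e2 : ∀ s ∈ Set.Icc (0:ℝ) d1, dist (γ₁ s) p = d1 - s := by
    intro s hs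
    have h' := hgeo₁ s hs d1 ⟨hd1n, le_rfl⟩
    rw [h1d] at h'
    rw [h', abs_of_nonpos (by linarith [hs.2])]; ring
  have e3 : ∀ s ∈ Set.Icc (0:ℝ) d2, dist p (γ₂ s) = s := by
    intro s hs
    rw [← h20, hgeo₂ _ ⟨le_rfl, hd2n⟩ _ hs, abs_of_nonpos (by linarith [hs.1])]; ring
  have e4 : ∀ s ∈ Set.Icc (0:ℝ) d2, dist (γ₂ s) y = d2 - s := by
    intro s hs
    have h' := hgeo₂ s hs d2 ⟨hd2n, le_rfl⟩
    rw [h2d] at h'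
    rw [h', abs_of_nonpos (by linarith [hs.2])]; ring
  have key : ∀ s ∈ Set.Icc (0:ℝ) d, ∀ t ∈ Set.Icc (0:ℝ) d, s ≤ d1 → ¬ t ≤ d1 →
      dist (γ₁ s) (γ₂ (t - d1)) = t - s := by
    intro s hs t ht hs1 ht1
    push_neg at ht1
    have htm : t - d1 ∈ Set.Icc (0:ℝ) d2 := ⟨by linarith, by linarith [ht.2, h]⟩
    have hsm : s ∈ Set.Icc (0:ℝ) d1 := ⟨hs.1, hs1⟩
    apply le_antisymm
    · calc dist (γ₁ s) (γ₂ (t - d1)) ≤ dist (γ₁ s) p + dist p (γ₂ (t - d1)) := dist_triangle _ _ _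
        _ = t - s := by rw [e2 s hsm, e3 _ htm]; ring
    · have hx2 : dist x (γ₂ (t - d1)) ≥ t := by
        have := dist_triangle x (γ₂ (t - d1)) y
        rw [e4 _ htm] at this
        linarith [h]
      have := dist_triangle x (γ₁ s) (γ₂ (t - d1))
      rw [e1 s hsm] at this
      linarith
  have hgeo : IsGeodesicOn γ 0 d := by
    intro s hs t ht
    by_cases hs1 : s ≤ d1 <;> by_cases ht1 : t ≤ d1 <;>
      simp only [hγ, hs1, ht1, if_true, if_false, if_pos, if_neg, not_false_iff]
    · exact hgeo₁ _ ⟨hs.1, hs1⟩ _ ⟨ht.1, ht1⟩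
    · rw [key s hs t ht hs1 ht1, abs_of_nonpos (by push_neg at ht1; linarith)]; ring
    · rw [dist_comm, key t ht s hs ht1 hs1, abs_of_nonneg (by push_neg at hs1; linarith)]
    · push_neg at hs1 ht1
      rw [hgeo₂ _ ⟨by linarith, by linarith [hs.2, h]⟩ _ ⟨by linarith, by linarith [ht.2, h]⟩]
      congr 1; ring
  have hγ0 : γ 0 = x := by
    simp only [hγ, if_pos hd1n, h10]
  have hγd : γ d = y := by
    by_cases hdd : d ≤ d1
    · have h2 : d2 = 0 := by linarith [h]
      have hpy : p = y := dist_eq_zero.mp h2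
      have hdd1 : d = d1 := by linarith [h, hd2n]
      show (if d ≤ d1 then γ₁ d else γ₂ (d - d1)) = y
      rw [hdd1, if_pos (le_refl d1), h1d, hpy]
    · simp only [hγ, if_neg hdd]
      have : d - d1 = d2 := by linarith [h]
      rw [this, h2d]
  have hSseg : IsGeodesicSegment (γ '' Set.Icc 0 d) x y :=
    ⟨0, d, γ, by rw [hd]; exact dist_nonneg, hgeo, hγ0, hγd, rfl⟩
  rw [← seg_eq hU hSseg]
  refine ⟨d1, ⟨hd1n, by linarith [h]⟩, ?_⟩
  simp only [hγ, if_pos le_rfl, h1d]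

lemma isClosed_seg (hU : UniquelyGeodesic X) (x y : X) : IsClosed (seg hU x y) := by
  obtain ⟨γ, hgeo, hg0, hgd, him⟩ := isGeodesicSegment_norm (seg_isSeg hU x y)
  have hlip : LipschitzOnWith 1 γ (Set.Icc 0 (dist x y)) := by
    apply LipschitzOnWith.of_dist_le_mul
    intro s hs t ht
    rw [hgeo _ hs _ ht, Real.dist_eq, NNReal.coe_one, one_mul]
  rw [him]
  exact (isCompact_Icc.image_of_continuousOn hlip.continuousOn).isClosed

end TreeHelpers

section Median

variable {X : Type*} [MetricSpace X]

lemma exists_median (hU : UniquelyGeodesic X)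
    (htree : ∀ x y z : X, ∀ Syx Sxz Syz : Set X,
      IsGeodesicSegment Syx y x → IsGeodesicSegment Sxz x z → IsGeodesicSegment Syz y z →
      Syx ∩ Sxz = {x} → Syx ∪ Sxz = Syz)
    (x y z : X) :
    ∃ m : X, m ∈ seg hU x y ∧ m ∈ seg hU x z ∧ dist y z = dist y m + dist m z := by
  obtain ⟨γ, hgeo, hg0, hgd, him⟩ := isGeodesicSegment_norm (seg_isSeg hU x y)
  set d := dist x y with hd
  have hdn : (0:ℝ) ≤ d := dist_nonneg
  -- clamp
  set c : ℝ → ℝ := fun t => max 0 (min t d) with hc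
  have hcmem : ∀ t, c t ∈ Set.Icc (0:ℝ) d := fun t =>
    ⟨le_max_left _ _, max_le hdn (min_le_right _ _)⟩
  have hceq : ∀ t ∈ Set.Icc (0:ℝ) d, c t = t := by
    intro t ht
    simp only [hc]
    rw [min_eq_left ht.2, max_eq_right ht.1]
  have hccont : Continuous c := continuous_const.max (continuous_id.min continuous_const)
  have hγcont : ContinuousOn γ (Set.Icc 0 d) := by
    have hlip : LipschitzOnWith 1 γ (Set.Icc 0 d) := by
      apply LipschitzOnWith.of_dist_le_mul
      intro s hs t ht
      rw [hgeo _ hs _ ht, Real.dist_eq, NNReal.coe_one, one_mul]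
    exact hlip.continuousOn
  have hγ'cont : Continuous (fun t => γ (c t)) := hγcont.comp_continuous hccont hcmem
  set T : Set ℝ := Set.Icc 0 d ∩ (fun t => γ (c t)) ⁻¹' (seg hU x z) with hT
  have hTclosed : IsClosed T := isClosed_Icc.inter ((isClosed_seg hU x z).preimage hγ'cont)
  have hxmem : x ∈ seg hU x z := mem_seg_of_dist hU (by simp)
  have h0T : (0:ℝ) ∈ T := by
    constructor
    · exact ⟨le_rfl, hdn⟩
    · show γ (c 0) ∈ seg hU x z
      rw [hceq 0 ⟨le_rfl, hdn⟩, hg0]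
      exact hxmem
  have hTne : T.Nonempty := ⟨0, h0T⟩
  have hTbdd : BddAbove T := BddAbove.mono Set.inter_subset_left bddAbove_Icc
  set t₀ := sSup T with ht₀
  have ht₀T : t₀ ∈ T := hTclosed.csSup_mem hTne hTbdd
  set m := γ t₀ with hm
  have ht₀I : t₀ ∈ Set.Icc (0:ℝ) d := ht₀T.1
  have hmxy : m ∈ seg hU x y := by rw [him]; exact ⟨t₀, ht₀I, rfl⟩
  have hmxz : m ∈ seg hU x z := by
    have := ht₀T.2
    rwa [Set.mem_preimage, hceq t₀ ht₀I] at this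
  have hxm : dist x m = t₀ := by
    rw [hm, ← hg0, hgeo _ ⟨le_rfl, hdn⟩ _ ht₀I, abs_of_nonpos (by linarith [ht₀I.1])]; ring
  -- key facts from membership
  have hBxy : dist x m + dist m y = dist x y := dist_add_of_mem_seg hU hmxy
  have hBxz : dist x m + dist m z = dist x z := dist_add_of_mem_seg hU hmxz
  -- points of any seg equal γ at their distance
  have hpoint : ∀ p ∈ seg hU x y, p = γ (dist x p) := by
    intro p hp
    rw [him] at hp
    obtain ⟨s, hs, rfl⟩ := hp
    have : dist x (γ s) = s := by
      rw [← hg0, hgeo _ ⟨le_rfl, hdn⟩ _ hs, abs_of_nonpos (by linarith [hs.1])]; ring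
    rw [this]
  -- intersection of [y,m] and [m,z] is {m}
  have hinter : seg hU y m ∩ seg hU m z = {m} := by
    apply Set.eq_singleton_iff_unique_mem.mpr
    constructor
    · constructor
      · exact mem_seg_of_dist hU (by simp)
      · exact mem_seg_of_dist hU (by simp)
    · rintro p ⟨hp1, hp2⟩
      have h1 : dist y p + dist p m = dist y m := dist_add_of_mem_seg hU hp1
      have h2 : dist m p + dist p z = dist m z := dist_add_of_mem_seg hU hp2
      have hpxy : p ∈ seg hU x y := by
        apply mem_seg_of_dist hU
        have t1 := dist_triangle x m p
        have t2 := dist_triangle x p y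
        have : dist p y = dist m y - dist m p := by
          rw [dist_comm p y, dist_comm m y, dist_comm m p] at *
          linarith [h1]
        linarith [hBxy, dist_comm m p ▸ t1]
      have hpxz : p ∈ seg hU x z := by
        apply mem_seg_of_dist hU
        have t1 := dist_triangle x m p
        have t2 := dist_triangle x p z
        have : dist p z = dist m z - dist m p := by linarith [h2]
        linarith [hBxz]
      have hxp1 : dist x p + dist p y = dist x y := dist_add_of_mem_seg hU hpxy
      have hxp2 : dist x p = dist x m + dist m p := by
        have hcomm1 : dist y m = dist m y := dist_comm _ _
        have hcomm2 : dist y p = dist p y := dist_comm _ _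
        have hcomm3 : dist p m = dist m p := dist_comm _ _
        linarith [hxp1, hBxy, h1]
      have hpT : dist x p ∈ T := by
        constructor
        · exact ⟨dist_nonneg, by
            have := dist_nonneg (x := p) (y := y)
            linarith [hxp1]⟩
        · show γ (c (dist x p)) ∈ seg hU x z
          rw [hceq (dist x p) ⟨dist_nonneg, by
            have := dist_nonneg (x := p) (y := y)
            linarith [hxp1]⟩]
          rw [← hpoint p hpxy]
          exact hpxz
      have hle : dist x p ≤ t₀ := le_csSup hTbdd hpT
      have : dist m p ≤ 0 := by linarith [hxp2, hxm]
      have : dist m p = 0 := le_antisymm this dist_nonneg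
      rw [← dist_eq_zero.mp this]
  have hun := htree m y z (seg hU y m) (seg hU m z) (seg hU y z)
    (seg_isSeg hU y m) (seg_isSeg hU m z) (seg_isSeg hU y z) hinter
  have hmyz : m ∈ seg hU y z := by
    rw [← hun]
    exact Or.inl (mem_seg_of_dist hU (by simp))
  exact ⟨m, hmxy, hmxz, (dist_add_of_mem_seg hU hmyz).symm⟩

end Median

/-- An `ℝ`-tree: a uniquely geodesic space such that whenever `[y,x] ∩ [x,z] = {x}`, one
has `[y,x] ∪ [x,z] = [y,z]`. -/
def IsRTree (X : Type*) [MetricSpace X] : Prop :=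
  UniquelyGeodesic X ∧
  ∀ x y z : X, ∀ Syx Sxz Syz : Set X,
    IsGeodesicSegment Syx y x → IsGeodesicSegment Sxz x z → IsGeodesicSegment Syz y z →
    Syx ∩ Sxz = {x} → Syx ∪ Sxz = Syz

/-- In a nonempty, convex and geodesically bounded subset of an `ℝ`-tree, every play of
the Lion-Man game ends with physical capture: `d(L_{n₀}, M_{n₀}) ≤ D` for some `n₀`. -/
theorem stmt15 {X : Type*} [MetricSpace X] (hX : IsRTree X)
    (A : Set X) (hA : A.Nonempty) (hconv : GeodesicConvex A)
    (hgb : GeodesicallyBounded A)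
    (D : ℝ) (hD : 0 < D) (L M : ℕ → X) (hplay : IsLionManPlay A D L M) :
    ∃ n₀ : ℕ, dist (L n₀) (M n₀) ≤ D := by
  by_contra hcon
  push_neg at hcon
  obtain ⟨hU, htree⟩ := hX
  obtain ⟨hLA, hMA, hsegs, hstep, hMstep⟩ := hplay
  -- normalized parametrizations of the segments [L n, M n]
  have hP : ∀ n, ∃ γ : ℝ → X, IsGeodesicOn γ 0 (dist (L n) (M n)) ∧ γ 0 = L n ∧
      γ (dist (L n) (M n)) = M n ∧ seg hU (L n) (M n) = γ '' Set.Icc 0 (dist (L n) (M n)) :=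
    fun n => isGeodesicSegment_norm (seg_isSeg hU _ _)
  choose φ hφgeo hφ0 hφd hφim using hP
  have dLL : ∀ n, dist (L n) (L (n+1)) = D := fun n => by
    rw [hstep n, min_eq_left (hcon n).le]
  have memLp : ∀ n, L (n+1) ∈ seg hU (L n) (M n) := by
    intro n
    obtain ⟨S, hS, hmem⟩ := hsegs n
    rwa [seg_eq hU hS] at hmem
  have B1 : ∀ n, dist (L n) (L (n+1)) + dist (L (n+1)) (M n) = dist (L n) (M n) :=
    fun n => dist_add_of_mem_seg hU (memLp n)
  have hLpφ : ∀ n, L (n+1) = φ n D := by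
    intro n
    have hm := memLp n
    rw [hφim n] at hm
    obtain ⟨t, ht, heq⟩ := hm
    have h1 : dist (L n) (φ n t) = t := by
      rw [← hφ0 n, hφgeo n 0 ⟨le_rfl, dist_nonneg⟩ t ht,
        abs_of_nonpos (by linarith [ht.1])]
      ring
    rw [heq, dLL n] at h1
    rw [← heq, ← h1]
  -- Step lemma: the lion stays behind the man
  have lemB : ∀ n, dist (L n) (M (n+1)) = D + dist (L (n+1)) (M (n+1)) := by
    intro n
    obtain ⟨m, hm1, hm2, hm3⟩ := exists_median hU htree (L n) (M n) (M (n+1))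
    have hδ1 := dist_add_of_mem_seg hU hm1
    have hδ2 := dist_add_of_mem_seg hU hm2
    have hpm : dist (L (n+1)) m = |D - dist (L n) m| := by
      have h := dist_eq_abs_of_mem_seg hU (memLp n) hm1
      rwa [dLL n] at h
    rcases le_or_gt D (dist (L n) m) with hcase | hcase
    · have hpm' : dist (L (n+1)) m = dist (L n) m - D := by
        rw [hpm, abs_of_nonpos (by linarith)]; ring
      have t1 := dist_triangle (L n) (L (n+1)) (M (n+1))
      have t2 := dist_triangle (L (n+1)) m (M (n+1))
      have hdLL := dLL n
      linarith [hδ2]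
    · exfalso
      have hpm' : dist (L (n+1)) m = D - dist (L n) m := by
        rw [hpm, abs_of_nonneg (by linarith)]
      have t2 := dist_triangle (L (n+1)) m (M (n+1))
      have hcomm : dist (M n) m = dist m (M n) := dist_comm _ _
      have h1 := hMstep n
      have h2 := hcon (n+1)
      have h3 := hcon n
      linarith [hm3, hδ1]
  -- Invariant: the lion walks along a geodesic from L 0 towards the man
  have lemC : ∀ n : ℕ, dist (L 0) (L n) = n * D ∧
      dist (L 0) (M n) = n * D + dist (L n) (M n) := by
    intro n
    induction n with
    | zero => simp
    | succ n ih =>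
      obtain ⟨ih1, ih2⟩ := ih
      have hB1 := B1 n
      have hdLL := dLL n
      have c1 : dist (L 0) (L (n+1)) = (n+1 : ℕ) * D := by
        have t1 := dist_triangle (L 0) (L (n+1)) (M n)
        have t2 := dist_triangle (L 0) (L n) (L (n+1))
        push_cast
        push_cast at ih1 ih2
        linarith
      have hLB := lemB n
      obtain ⟨m, hm1, hm2, hm3⟩ := exists_median hU htree (L (n+1)) (L 0) (M (n+1))
      have hLn_mem : L n ∈ seg hU (L (n+1)) (L 0) := by
        apply mem_seg_of_dist hU
        rw [dist_comm (L (n+1)) (L n), dist_comm (L n) (L 0), dist_comm (L (n+1)) (L 0)]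
        push_cast at c1 ih1
        linarith
      have habs := dist_eq_abs_of_mem_seg hU hLn_mem hm1
      have hdpLn : dist (L (n+1)) (L n) = D := by rw [dist_comm]; exact hdLL
      rw [hdpLn] at habs
      have hδ2 := dist_add_of_mem_seg hU hm2
      have ht := dist_triangle (L n) m (M (n+1))
      have hδ0 : dist (L (n+1)) m = 0 := by
        rcases le_or_gt (dist (L (n+1)) m) D with hc | hc
        · have he : dist (L n) m = D - dist (L (n+1)) m := by
            rw [habs, abs_of_nonneg (by linarith)]
          linarith [hLB, hδ2, ht, dist_nonneg (x := L (n+1)) (y := m)]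
        · exfalso
          have he : dist (L n) m = dist (L (n+1)) m - D := by
            rw [habs, abs_of_nonpos (by linarith)]; ring
          linarith [hLB, hδ2, ht]
      have hmeq : m = L (n+1) := (dist_eq_zero.mp hδ0).symm
      refine ⟨c1, ?_⟩
      rw [hmeq] at hm3
      rw [hm3, c1]
  -- distances between lion positions
  have dLk : ∀ k j : ℕ, dist (L k) (L (k + j)) = j * D := by
    intro k j
    induction j with
    | zero => simp
    | succ j ih =>
      have e : k + (j + 1) = (k + j) + 1 := by omega
      rw [e]
      have t1 := dist_triangle (L k) (L (k+j)) (L (k+j+1))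
      have t2 := dist_triangle (L 0) (L k) (L (k+j+1))
      have h1 := (lemC k).1
      have h2 := (lemC (k+j+1)).1
      have h3 := dLL (k+j)
      push_cast at h1 h2 ⊢
      linarith
  -- the ray
  have hfloor : ∀ t : ℝ, 0 ≤ t →
      ((⌊t / D⌋₊ : ℝ) * D ≤ t ∧ t < ((⌊t / D⌋₊ : ℝ) + 1) * D) := by
    intro t ht
    constructor
    · exact (le_div_iff₀ hD).mp (Nat.floor_le (div_nonneg ht hD.le))
    · exact (div_lt_iff₀ hD).mp (Nat.lt_floor_add_one (t / D))
  have hkey : ∀ t : ℝ, 0 ≤ t →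
      (φ (⌊t / D⌋₊) (t - (⌊t / D⌋₊ : ℝ) * D) ∈ seg hU (L ⌊t / D⌋₊) (M ⌊t / D⌋₊)) ∧
      dist (L ⌊t / D⌋₊) (φ (⌊t / D⌋₊) (t - (⌊t / D⌋₊ : ℝ) * D)) = t - (⌊t / D⌋₊ : ℝ) * D ∧
      dist (φ (⌊t / D⌋₊) (t - (⌊t / D⌋₊ : ℝ) * D)) (M ⌊t / D⌋₊) =
        dist (L ⌊t / D⌋₊) (M ⌊t / D⌋₊) - (t - (⌊t / D⌋₊ : ℝ) * D) ∧
      dist (L 0) (φ (⌊t / D⌋₊) (t - (⌊t / D⌋₊ : ℝ) * D)) = t := by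
    intro t ht
    obtain ⟨hl, hr⟩ := hfloor t ht
    set n := ⌊t / D⌋₊ with hn
    set r := t - (n : ℝ) * D with hrdef
    have hr0 : 0 ≤ r := by simp only [hrdef]; linarith
    have hrD : r < D := by simp only [hrdef]; linarith
    have hrI : r ∈ Set.Icc (0:ℝ) (dist (L n) (M n)) := ⟨hr0, by linarith [hcon n]⟩
    have hmem : φ n r ∈ seg hU (L n) (M n) := by
      rw [hφim n]; exact ⟨r, hrI, rfl⟩
    have hd1 : dist (L n) (φ n r) = r := by
      rw [← hφ0 n, hφgeo n 0 ⟨le_rfl, dist_nonneg⟩ r hrI, abs_of_nonpos (by linarith)]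
      ring
    have hd2 : dist (φ n r) (M n) = dist (L n) (M n) - r := by
      have h' := hφgeo n r hrI (dist (L n) (M n)) ⟨dist_nonneg, le_rfl⟩
      rw [hφd n] at h'
      rw [h', abs_of_nonpos (by linarith [hrI.2])]
      ring
    refine ⟨hmem, hd1, hd2, ?_⟩
    have hC := lemC n
    have t1 := dist_triangle (L 0) (L n) (φ n r)
    have t2 := dist_triangle (L 0) (φ n r) (M n)
    have : dist (L 0) (φ n r) = (n : ℝ) * D + r := by linarith [hC.1, hC.2]
    rw [this]
    simp only [hrdef]
    ring
  -- geodesic ray property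
  have aux : ∀ s t : ℝ, 0 ≤ s → s ≤ t →
      dist (φ (⌊s / D⌋₊) (s - (⌊s / D⌋₊ : ℝ) * D)) (φ (⌊t / D⌋₊) (t - (⌊t / D⌋₊ : ℝ) * D))
        = t - s := by
    intro s t hs hst
    have ht : 0 ≤ t := le_trans hs hst
    obtain ⟨hsmem, hsd1, hsd2, hsd0⟩ := hkey s hs
    obtain ⟨htmem, htd1, htd2, htd0⟩ := hkey t ht
    have hmn : ⌊s / D⌋₊ ≤ ⌊t / D⌋₊ :=
      Nat.floor_mono (div_le_div_of_nonneg_right hst hD.le)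
    set m := ⌊s / D⌋₊ with hmdef
    set n := ⌊t / D⌋₊ with hndef
    set rs := s - (m : ℝ) * D with hrsdef
    set rt := t - (n : ℝ) * D with hrtdef
    obtain ⟨hsl, hsr⟩ := hfloor s hs
    obtain ⟨htl, htr⟩ := hfloor t ht
    have hrs0 : 0 ≤ rs := by simp only [hrsdef]; linarith
    have hrsD : rs < D := by simp only [hrsdef]; linarith
    have hrt0 : 0 ≤ rt := by simp only [hrtdef]; linarith
    have hrtD : rt < D := by simp only [hrtdef]; linarith
    have low : t - s ≤ dist (φ m rs) (φ n rt) := by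
      have := dist_triangle (L 0) (φ m rs) (φ n rt)
      linarith [hsd0, htd0]
    rcases Nat.eq_or_lt_of_le hmn with heq | hlt
    · -- same segment
      have hrsI : rs ∈ Set.Icc (0:ℝ) (dist (L m) (M m)) := ⟨hrs0, by linarith [hcon m]⟩
      have hrtI : rt ∈ Set.Icc (0:ℝ) (dist (L m) (M m)) := by
        rw [heq]; exact ⟨hrt0, by linarith [hcon n]⟩
      have h' := hφgeo m rs hrsI rt (by rw [heq] at hrtI ⊢; exact hrtI)
      rw [← heq]
      rw [h']
      have : rs - rt = s - t := by
        simp only [hrsdef, hrtdef, ← heq]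
        ring
      rw [this, abs_of_nonpos (by linarith)]
      ring
    · -- different segments
      obtain ⟨j, hj⟩ : ∃ j : ℕ, n = (m + 1) + j := ⟨n - (m+1), by omega⟩
      have hDm : D ≤ dist (L m) (M m) := (hcon m).le
      have hDI : D ∈ Set.Icc (0:ℝ) (dist (L m) (M m)) := ⟨hD.le, hDm⟩
      have hrsI : rs ∈ Set.Icc (0:ℝ) (dist (L m) (M m)) := ⟨hrs0, by linarith⟩
      have hup1 : dist (φ m rs) (L (m+1)) = D - rs := by
        rw [hLpφ m, hφgeo m rs hrsI D hDI, abs_of_nonpos (by linarith)]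
        ring
      have hup2 : dist (L (m+1)) (L n) = (j : ℝ) * D := by
        rw [hj]; exact dLk (m+1) j
      have hup3 : dist (L n) (φ n rt) = rt := htd1
      have hcast : (n : ℝ) = (m : ℝ) + 1 + (j : ℝ) := by
        rw [hj]; push_cast; ring
      have hup : dist (φ m rs) (φ n rt) ≤ t - s := by
        have u1 := dist_triangle (φ m rs) (L (m+1)) (φ n rt)
        have u2 := dist_triangle (L (m+1)) (L n) (φ n rt)
        have : (D - rs) + ((j:ℝ) * D + rt) = t - s := by
          simp only [hrsdef, hrtdef]
          rw [hcast]
          ring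
        linarith [hup1, hup2, hup3]
      linarith
  refine hgb ⟨fun t => φ (⌊t / D⌋₊) (t - (⌊t / D⌋₊ : ℝ) * D), ?_, ?_⟩
  · intro s hs t ht
    simp only [Set.mem_Ici] at hs ht
    rcases le_total s t with h | h
    · rw [aux s t hs h, abs_of_nonpos (by linarith)]; ring
    · rw [dist_comm, aux t s ht h, abs_of_nonneg (by linarith)]
  · intro t ht
    simp only [Set.mem_Ici] at ht
    exact hconv (L ⌊t / D⌋₊) (hLA _) (M ⌊t / D⌋₊) (hMA _) _ (seg_isSeg hU _ _)
      (hkey t ht).1
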